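/- (Hoffman–Wielandt inequality for quaternion Hermitian matrices) Let A, B ∈ ℍ^{m×m} be Hermitian with eigenvalues λ₁(A) ≥ … ≥ λ_m(A) and λ₁(B) ≥ … ≥ λ_m(B). Then Σᵢ (λᵢ(A) − λᵢ(B))² ≤ ‖A − B‖_F², where ‖·‖_F is the Frobenius norm. -/

import Mathlib

open Quaternion Matrix Finset

/-!
Put `W = Uᴴ V`. The `(i, j)` entry of `Uᴴ (A - B) V` is `(λᵢ(A) - λⱼ(B)) Wᵢⱼ`, and conjugating by
unitaries preserves the Frobenius norm, so `‖A - B‖_F² = ∑ᵢⱼ |Wᵢⱼ|² (λᵢ(A) - λⱼ(B))²`. As `W` is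
unitary, `(|Wᵢⱼ|²)` is doubly stochastic. By Birkhoff's theorem the linear functional
`S ↦ ∑ᵢⱼ Sᵢⱼ λᵢ(A) λⱼ(B)` is maximised over doubly stochastic `S` at a permutation matrix, hence,
by the rearrangement inequality for the two decreasing sequences, at the identity.
-/

namespace Quaternion

variable {R : Type*} [CommRing R]

theorem re_sum {ι : Type*} (s : Finset ι) (f : ι → ℍ[R]) :
    (∑ i ∈ s, f i).re = ∑ i ∈ s, (f i).re :=
  map_sum (QuaternionAlgebra.reₗ (-1) 0 (-1)) f s

theorem re_mul_comm (a b : ℍ[R]) : (a * b).re = (b * a).re := by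
  simp only [re_mul]
  ring

theorem re_mul_star_self (a : ℍ) : (a * star a).re = ‖a‖ ^ 2 :=
  real_inner_self_eq_norm_sq a

end Quaternion

section Rearrangement

variable {R n : Type*} [Field R] [LinearOrder R] [IsStrictOrderedRing R] [Fintype n]
  [DecidableEq n] {S : Matrix n n R} {a b : n → R}

theorem dotProduct_mulVec_le_of_mem_doublyStochastic (hS : S ∈ doublyStochastic R n)
    (hab : Monovary a b) : a ⬝ᵥ (S *ᵥ b) ≤ a ⬝ᵥ b := by
  have hS' : S ∈ convexHull R {σ.permMatrix R | σ : Equiv.Perm n} := by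
    rwa [← doublyStochastic_eq_convexHull_permMatrix]
  show S ∈ {T : Matrix n n R | a ⬝ᵥ (T *ᵥ b) ≤ a ⬝ᵥ b}
  refine convexHull_min ?_ (convex_halfSpace_le ?_ (a ⬝ᵥ b)) hS'
  · rintro _ ⟨σ, rfl⟩
    simpa [permMatrix_mulVec, dotProduct] using hab.sum_mul_comp_perm_le_sum_mul (σ := σ)
  · exact ⟨fun S T => by simp [add_mulVec, dotProduct_add],
      fun c S => by simp [smul_mulVec, dotProduct_smul]⟩

theorem sum_sub_sq_le_of_mem_doublyStochastic (hS : S ∈ doublyStochastic R n)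
    (hab : Monovary a b) :
    ∑ i, (a i - b i) ^ 2 ≤ ∑ i, ∑ j, S i j * (a i - b j) ^ 2 := by
  have hexpand : ∑ i, ∑ j, S i j * (a i - b j) ^ 2
      = ∑ i, a i ^ 2 + ∑ j, b j ^ 2 - 2 * (a ⬝ᵥ (S *ᵥ b)) := by
    have hrow i : ∑ j, S i j * a i ^ 2 = a i ^ 2 := by
      rw [← sum_mul, sum_row_of_mem_doublyStochastic hS, one_mul]
    have hcol j : ∑ i, S i j * b j ^ 2 = b j ^ 2 := by
      rw [← sum_mul, sum_col_of_mem_doublyStochastic hS, one_mul]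
    have hcross : ∑ i, ∑ j, S i j * (2 * a i * b j) = 2 * (a ⬝ᵥ (S *ᵥ b)) := by
      simp only [dotProduct, mulVec, mul_sum]
      exact sum_congr rfl fun i _ => sum_congr rfl fun j _ => by ring
    simp only [sub_sq, mul_add, mul_sub, sum_add_distrib, sum_sub_distrib, hrow, hcross]
    rw [sum_comm (f := fun i j => S i j * b j ^ 2)]
    simp only [hcol]
    ring
  have hdiag : ∑ i, (a i - b i) ^ 2 = ∑ i, a i ^ 2 + ∑ i, b i ^ 2 - 2 * (a ⬝ᵥ b) := by
    simp only [dotProduct, mul_sum, sub_sq, sum_add_distrib, sum_sub_distrib]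
    ring_nf
  rw [hexpand, hdiag]
  linarith [dotProduct_mulVec_le_of_mem_doublyStochastic hS hab]

end Rearrangement

namespace Matrix

variable {m n : Type*} [Fintype m] [Fintype n]

/-- The trace of a quaternion matrix product is not cyclic, but its real part is. -/
theorem re_trace_mul_comm {R : Type*} [CommRing R] (X : Matrix m n ℍ[R])
    (Y : Matrix n m ℍ[R]) : (X * Y).trace.re = (Y * X).trace.re := by
  simp only [trace, diag, mul_apply, re_sum, re_mul_comm (X _ _)]
  exact sum_comm

theorem sum_norm_sq_eq_re_trace (N : Matrix m n ℍ) :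
    ∑ i, ∑ j, ‖N i j‖ ^ 2 = (N * Nᴴ).trace.re := by
  simp only [trace, diag, mul_apply, conjTranspose_apply, re_sum, re_mul_star_self]

variable [DecidableEq m] [DecidableEq n]

theorem sum_norm_sq_mul_mul_of_mem_unitary (M : Matrix m n ℍ) {U : Matrix m m ℍ}
    {V : Matrix n n ℍ} (hU : U ∈ unitary (Matrix m m ℍ)) (hV : V ∈ unitary (Matrix n n ℍ)) :
    ∑ i, ∑ j, ‖(U * M * V) i j‖ ^ 2 = ∑ i, ∑ j, ‖M i j‖ ^ 2 := by
  have hUU : Uᴴ * U = 1 := Unitary.star_mul_self_of_mem hU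
  have hVV : V * Vᴴ = 1 := Unitary.mul_star_self_of_mem hV
  have hconj : (U * M * V) * (U * M * V)ᴴ = U * (M * Mᴴ * Uᴴ) := by
    simp only [conjTranspose_mul, Matrix.mul_assoc, ← Matrix.mul_assoc V, hVV, Matrix.one_mul]
  rw [sum_norm_sq_eq_re_trace, sum_norm_sq_eq_re_trace, hconj, re_trace_mul_comm,
    Matrix.mul_assoc, hUU, Matrix.mul_one]

theorem of_norm_sq_mem_doublyStochastic {W : Matrix n n ℍ} (hW : W ∈ unitary (Matrix n n ℍ)) :
    of (fun i j => ‖W i j‖ ^ 2) ∈ doublyStochastic ℝ n := by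
  refine mem_doublyStochastic_iff_sum.2 ⟨fun _ _ => sq_nonneg _, fun i => ?_, fun j => ?_⟩
  · have h := congr_arg (fun X => (X i i).re) (Unitary.mul_star_self_of_mem hW)
    simpa only [mul_apply, star_apply, re_sum, re_mul_star_self, one_apply_eq, re_one,
      of_apply] using h
  · have h := congr_arg (fun X => (X j j).re) (Unitary.star_mul_self_of_mem hW)
    simpa only [mul_apply, star_apply, re_sum, re_mul_comm (star _), re_mul_star_self,
      one_apply_eq, re_one, of_apply] using h

theorem conjTranspose_mul_sub_mul_apply {R : Type*} [CommRing R] {U V : Matrix n n ℍ[R]}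
    (hU : Uᴴ * U = 1) (hV : Vᴴ * V = 1) (a b : n → R) (i j : n) :
    (Uᴴ * (U * diagonal (fun i => (a i : ℍ[R])) * Uᴴ - V * diagonal (fun i => (b i : ℍ[R])) * Vᴴ)
      * V) i j = ((a i - b j : R) : ℍ[R]) * (Uᴴ * V) i j := by
  have hA : Uᴴ * (U * diagonal (fun i => (a i : ℍ[R])) * Uᴴ) * V
      = diagonal (fun i => (a i : ℍ[R])) * (Uᴴ * V) := by
    simp only [← Matrix.mul_assoc, hU, Matrix.one_mul]
  have hB : Uᴴ * (V * diagonal (fun i => (b i : ℍ[R])) * Vᴴ) * V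
      = Uᴴ * V * diagonal (fun i => (b i : ℍ[R])) := by
    simp only [Matrix.mul_assoc, hV, Matrix.mul_one]
  rw [Matrix.mul_sub, Matrix.sub_mul, hA, hB, sub_apply, diagonal_mul, mul_diagonal,
    ← coe_commutes, ← sub_mul, ← Quaternion.coe_sub]

end Matrix

theorem quaternion_hoffman_wielandt_general (m : ℕ)
    (A B U V : Matrix (Fin m) (Fin m) ℍ[ℝ]) (lamA lamB : Fin m → ℝ)
    (hU : Uᴴ * U = 1 ∧ U * Uᴴ = 1) (hV : Vᴴ * V = 1 ∧ V * Vᴴ = 1)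
    (hlamA : ∀ i j : Fin m, i ≤ j → lamA j ≤ lamA i)
    (hlamB : ∀ i j : Fin m, i ≤ j → lamB j ≤ lamB i)
    (hAdiag : A = U * Matrix.diagonal (fun i => (lamA i : ℍ[ℝ])) * Uᴴ)
    (hBdiag : B = V * Matrix.diagonal (fun i => (lamB i : ℍ[ℝ])) * Vᴴ) :
    ∑ i, (lamA i - lamB i) ^ 2 ≤ ∑ i, ∑ j, ‖(A - B) i j‖ ^ 2 := by
  have hU' : U ∈ unitary (Matrix (Fin m) (Fin m) ℍ) := hU
  have hV' : V ∈ unitary (Matrix (Fin m) (Fin m) ℍ) := hV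
  have hW : Uᴴ * V ∈ unitary (Matrix (Fin m) (Fin m) ℍ) := mul_mem (Unitary.star_mem hU') hV'
  calc ∑ i, (lamA i - lamB i) ^ 2
      ≤ ∑ i, ∑ j, ‖(Uᴴ * V) i j‖ ^ 2 * (lamA i - lamB j) ^ 2 :=
        sum_sub_sq_le_of_mem_doublyStochastic (of_norm_sq_mem_doublyStochastic hW)
          (Antitone.monovary hlamA hlamB)
    _ = ∑ i, ∑ j, ‖(Uᴴ * (A - B) * V) i j‖ ^ 2 := by
        simp only [hAdiag, hBdiag, conjTranspose_mul_sub_mul_apply hU.1 hV.1, norm_mul,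
          norm_coe, Real.norm_eq_abs, mul_pow, sq_abs, mul_comm]
    _ = ∑ i, ∑ j, ‖(A - B) i j‖ ^ 2 :=
        sum_norm_sq_mul_mul_of_mem_unitary _ (Unitary.star_mem hU') hV'

/-- Hoffman–Wielandt inequality for quaternion Hermitian matrices:
`∑ᵢ (λᵢ(A) − λᵢ(B))² ≤ ‖A − B‖_F²`. -/
theorem quaternion_hoffman_wielandt (m : ℕ)
    (A B U V : Matrix (Fin m) (Fin m) ℍ[ℝ]) (lamA lamB : Fin m → ℝ)
    (hAh : A.IsHermitian) (hBh : B.IsHermitian)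
    (hU : Uᴴ * U = 1 ∧ U * Uᴴ = 1) (hV : Vᴴ * V = 1 ∧ V * Vᴴ = 1)
    (hlamA : ∀ i j : Fin m, i ≤ j → lamA j ≤ lamA i)
    (hlamB : ∀ i j : Fin m, i ≤ j → lamB j ≤ lamB i)
    (hAdiag : A = U * Matrix.diagonal (fun i => (lamA i : ℍ[ℝ])) * Uᴴ)
    (hBdiag : B = V * Matrix.diagonal (fun i => (lamB i : ℍ[ℝ])) * Vᴴ) :
    ∑ i, (lamA i - lamB i) ^ 2 ≤ ∑ i, ∑ j, ‖(A - B) i j‖ ^ 2 :=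
  quaternion_hoffman_wielandt_general m A B U V lamA lamB hU hV hlamA hlamB hAdiag hBdiag
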